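/- arXiv:2407.21472 — 2 statements merged into one kernel-verified Lean document; each statement's English description precedes it below -/
import Mathlib

section
/- For the path P_n with 2 ≤ n ≤ 5, the double coalition number satisfies DC(P_n) = 2. -/
open SimpleGraph

variable {V : Type*}

/-- `D` is a double dominating set: every vertex has at least two vertices of its
closed neighborhood in `D`. -/
def DDom (G : SimpleGraph V) (D : Set V) : Prop :=
  ∀ v : V, 2 ≤ ((G.neighborSet v ∪ {v}) ∩ D).ncard

/-- `P` is a double coalition partition of `G`: a partition of the vertex set into
nonempty parts, none of which is a double dominating set, such that every part forms
a double coalition with some other part. -/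
def IsDCPartition (G : SimpleGraph V) (P : Finset (Set V)) : Prop :=
  (∀ A ∈ P, A.Nonempty) ∧
  (∀ A ∈ P, ∀ B ∈ P, A ≠ B → Disjoint A B) ∧
  (P.sup id = Set.univ) ∧
  (∀ A ∈ P, ¬ DDom G A) ∧
  (∀ A ∈ P, ∃ B ∈ P, B ≠ A ∧ DDom G (A ∪ B))

/-- The double coalition number: the maximum cardinality of a double coalition
partition (0 if none exists). -/
noncomputable def DC (G : SimpleGraph V) : ℕ :=
  sSup {k | ∃ P : Finset (Set V), IsDCPartition G P ∧ P.card = k}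

/-- `P` is a double domatic partition: a partition of the vertex set into double
dominating sets. -/
def IsDDomaticPartition (G : SimpleGraph V) (P : Finset (Set V)) : Prop :=
  (∀ A ∈ P, A.Nonempty) ∧
  (∀ A ∈ P, ∀ B ∈ P, A ≠ B → Disjoint A B) ∧
  (P.sup id = Set.univ) ∧
  (∀ A ∈ P, DDom G A)

/-- The double domatic number `d_{×2}(G)`. -/
noncomputable def doubleDomatic (G : SimpleGraph V) : ℕ :=
  sSup {k | ∃ P : Finset (Set V), IsDDomaticPartition G P ∧ P.card = k}

/-- The double domination number `γ_{×2}(G)`. -/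
noncomputable def gamma2 (G : SimpleGraph V) : ℕ :=
  sInf {k | ∃ D : Set V, DDom G D ∧ D.ncard = k}

section Helpers

lemma cn0 {n : ℕ} (h : 2 ≤ n) :
    (pathGraph n).neighborSet ⟨0, by omega⟩ ∪ {⟨0, by omega⟩} =
      {(⟨0, by omega⟩ : Fin n), ⟨1, by omega⟩} := by
  ext u
  have := u.isLt
  simp only [Set.mem_union, mem_neighborSet, pathGraph_adj, Set.mem_singleton_iff,
    Set.mem_insert_iff, Fin.ext_iff]
  omega

lemma cn_last {n : ℕ} (h : 2 ≤ n) :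
    (pathGraph n).neighborSet ⟨n-1, by omega⟩ ∪ {⟨n-1, by omega⟩} =
      {(⟨n-2, by omega⟩ : Fin n), ⟨n-1, by omega⟩} := by
  ext u
  have := u.isLt
  simp only [Set.mem_union, mem_neighborSet, pathGraph_adj, Set.mem_singleton_iff,
    Set.mem_insert_iff, Fin.ext_iff]
  omega

lemma pair_mem_of_ddom {G : SimpleGraph V} {D : Set V} {v a b : V}
    (hab : a ≠ b) (h : G.neighborSet v ∪ {v} = {a, b}) (hD : DDom G D) :
    a ∈ D ∧ b ∈ D := by
  have h2 := hD v
  rw [h] at h2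
  have heq : ({a, b} : Set V) ∩ D = {a, b} :=
    Set.eq_of_subset_of_ncard_le Set.inter_subset_left
      (by rw [Set.ncard_pair hab]; exact h2) ((Set.finite_singleton b).insert a)
  have ha : a ∈ ({a, b} : Set V) ∩ D := by rw [heq]; exact Set.mem_insert a {b}
  have hb : b ∈ ({a, b} : Set V) ∩ D := by
    rw [heq]; exact Set.mem_insert_of_mem a rfl
  exact ⟨ha.2, hb.2⟩

lemma ddom_path_forced {n : ℕ} (h2 : 2 ≤ n) {D : Set (Fin n)}
    (hD : DDom (pathGraph n) D) :
    (⟨0, by omega⟩ : Fin n) ∈ D ∧ (⟨1, by omega⟩ : Fin n) ∈ D ∧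
      (⟨n-2, by omega⟩ : Fin n) ∈ D ∧ (⟨n-1, by omega⟩ : Fin n) ∈ D := by
  have hab : (⟨0, by omega⟩ : Fin n) ≠ ⟨1, by omega⟩ := by
    simp only [ne_eq, Fin.ext_iff]; omega
  have hcd : (⟨n-2, by omega⟩ : Fin n) ≠ ⟨n-1, by omega⟩ := by
    simp only [ne_eq, Fin.ext_iff]; omega
  have h1 := pair_mem_of_ddom hab (cn0 h2) hD
  have h3 := pair_mem_of_ddom hcd (cn_last h2) hD
  exact ⟨h1.1, h1.2, h3.1, h3.2⟩

lemma not_ddom_singleton (G : SimpleGraph V) (v : V) : ¬ DDom G {v} := by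
  intro h
  have h2 := h v
  have hle : ((G.neighborSet v ∪ {v}) ∩ {v}).ncard ≤ 1 := by
    calc ((G.neighborSet v ∪ {v}) ∩ {v}).ncard
        ≤ ({v} : Set V).ncard :=
          Set.ncard_le_ncard Set.inter_subset_right (Set.finite_singleton v)
      _ = 1 := Set.ncard_singleton v
  omega

lemma ddom_univ_path {n : ℕ} (h2 : 2 ≤ n) : DDom (pathGraph n) Set.univ := by
  intro v
  have hvlt := v.isLt
  obtain ⟨w, hw⟩ : ∃ w : Fin n, (pathGraph n).Adj v w := by
    by_cases h : v.val + 1 < n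
    · exact ⟨⟨v.val + 1, h⟩, by rw [pathGraph_adj]; left; rfl⟩
    · refine ⟨⟨v.val - 1, by omega⟩, ?_⟩
      rw [pathGraph_adj]; right; simp only []; omega
  have hsub : ({v, w} : Set (Fin n)) ⊆ ((pathGraph n).neighborSet v ∪ {v}) ∩ Set.univ := by
    intro x hx
    rcases hx with rfl | hx
    · exact ⟨Or.inr rfl, Set.mem_univ _⟩
    · exact ⟨Or.inl (by rw [Set.mem_singleton_iff] at hx; subst hx; exact hw), Set.mem_univ _⟩
  calc 2 = ({v, w} : Set (Fin n)).ncard := (Set.ncard_pair hw.ne).symm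
    _ ≤ _ := Set.ncard_le_ncard hsub (Set.toFinite _)

lemma exists_dc_partition {n : ℕ} (h2 : 2 ≤ n) :
    ∃ P : Finset (Set (Fin n)), IsDCPartition (pathGraph n) P ∧ P.card = 2 := by
  classical
  set v0 : Fin n := ⟨0, by omega⟩ with hv0
  have hAB : ({v0} : Set (Fin n)) ≠ {v0}ᶜ := by
    intro h
    have : v0 ∈ ({v0}ᶜ : Set (Fin n)) := h ▸ rfl
    exact this rfl
  have hcomplne : ({v0}ᶜ : Set (Fin n)).Nonempty := by
    refine ⟨⟨1, by omega⟩, ?_⟩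
    simp only [Set.mem_compl_iff, Set.mem_singleton_iff, hv0, Fin.ext_iff]
    omega
  have hnotcompl : ¬ DDom (pathGraph n) ({v0}ᶜ) := by
    intro h
    have h2' := h v0
    have heq : ((pathGraph n).neighborSet v0 ∪ {v0}) ∩ {v0}ᶜ = {(⟨1, by omega⟩ : Fin n)} := by
      ext u
      have := u.isLt
      simp only [Set.mem_inter_iff, Set.mem_union, mem_neighborSet, pathGraph_adj,
        Set.mem_singleton_iff, Set.mem_compl_iff, Set.mem_insert_iff, hv0, Fin.ext_iff]
      omega
    rw [heq, Set.ncard_singleton] at h2'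
    omega
  refine ⟨{{v0}, {v0}ᶜ}, ⟨?_, ?_, ?_, ?_, ?_⟩, ?_⟩
  · intro A hA
    rcases Finset.mem_insert.mp hA with rfl | hA
    · exact ⟨v0, rfl⟩
    · rw [Finset.mem_singleton] at hA; subst hA; exact hcomplne
  · intro A hA B hB hne
    rcases Finset.mem_insert.mp hA with rfl | hA <;>
      rcases Finset.mem_insert.mp hB with rfl | hB
    · exact absurd rfl hne
    · rw [Finset.mem_singleton] at hB; subst hB; exact disjoint_compl_right
    · rw [Finset.mem_singleton] at hA; subst hA; exact disjoint_compl_left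
    · rw [Finset.mem_singleton] at hA hB; subst hA; subst hB; exact absurd rfl hne
  · simp [Finset.sup_insert, Finset.sup_singleton]
  · intro A hA
    rcases Finset.mem_insert.mp hA with rfl | hA
    · exact not_ddom_singleton _ _
    · rw [Finset.mem_singleton] at hA; subst hA; exact hnotcompl
  · intro A hA
    rcases Finset.mem_insert.mp hA with rfl | hA
    · refine ⟨{v0}ᶜ, by simp, hAB.symm, ?_⟩
      rw [Set.union_compl_self]
      exact ddom_univ_path h2
    · rw [Finset.mem_singleton] at hA; subst hA
      refine ⟨{v0}, by simp, hAB, ?_⟩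
      rw [Set.compl_union_self]
      exact ddom_univ_path h2
  · exact Finset.card_pair hAB

lemma ddom_eq_univ {n : ℕ} (h2 : 2 ≤ n) (h4 : n ≤ 4) {D : Set (Fin n)}
    (hD : DDom (pathGraph n) D) : D = Set.univ := by
  obtain ⟨ha, hb, hc, hd⟩ := ddom_path_forced h2 hD
  apply Set.eq_univ_of_forall
  intro x
  have hx := x.isLt
  have : x = (⟨0, by omega⟩ : Fin n) ∨ x = ⟨1, by omega⟩ ∨ x = ⟨n-2, by omega⟩ ∨
      x = ⟨n-1, by omega⟩ := by
    simp only [Fin.ext_iff]; omega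
  rcases this with h | h | h | h
  exacts [h ▸ ha, h ▸ hb, h ▸ hc, h ▸ hd]

lemma card_le_two_of_ddom_univ {G : SimpleGraph V}
    (hdd : ∀ D : Set V, DDom G D → D = Set.univ)
    {P : Finset (Set V)} (hP : IsDCPartition G P) : P.card ≤ 2 := by
  classical
  by_contra hcard
  push_neg at hcard
  obtain ⟨hne, hdisj, -, -, hpart⟩ := hP
  obtain ⟨A, hA⟩ := Finset.card_pos.mp (by omega : 0 < P.card)
  obtain ⟨B, hB, hBA, hDD⟩ := hpart A hA
  obtain ⟨C, hC⟩ := Finset.card_pos.mp (show 0 < ((P.erase A).erase B).card by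
    rw [Finset.card_erase_of_mem (Finset.mem_erase.mpr ⟨hBA, hB⟩),
      Finset.card_erase_of_mem hA]
    omega)
  have h1 := Finset.mem_erase.mp hC
  have h2 := Finset.mem_erase.mp h1.2
  obtain ⟨c, hc⟩ := hne C h2.2
  have hcu : c ∈ A ∪ B := (hdd _ hDD) ▸ Set.mem_univ c
  rcases hcu with h | h
  · exact Set.disjoint_left.mp (hdisj C h2.2 A hA h2.1) hc h
  · exact Set.disjoint_left.mp (hdisj C h2.2 B hB h1.1) hc h

lemma no_room_five {A B C : Set (Fin 5)} (hAB : Disjoint A B) (hBC : Disjoint B C)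
    (h0 : (⟨0, by omega⟩ : Fin 5) ∈ A) (h1 : (⟨1, by omega⟩ : Fin 5) ∈ A)
    (h3 : (⟨3, by omega⟩ : Fin 5) ∈ A) (h4 : (⟨4, by omega⟩ : Fin 5) ∈ A)
    (h2 : (⟨2, by omega⟩ : Fin 5) ∈ C) : ¬ B.Nonempty := by
  rintro ⟨b, hb⟩
  have hbA : b ∉ A := Set.disjoint_right.mp hAB hb
  have hbC : b ∉ C := Set.disjoint_left.mp hBC hb
  have e0 : b ≠ ⟨0, by omega⟩ := fun h => hbA (h ▸ h0)
  have e1 : b ≠ ⟨1, by omega⟩ := fun h => hbA (h ▸ h1)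
  have e2 : b ≠ ⟨2, by omega⟩ := fun h => hbC (h ▸ h2)
  have e3 : b ≠ ⟨3, by omega⟩ := fun h => hbA (h ▸ h3)
  have e4 : b ≠ ⟨4, by omega⟩ := fun h => hbA (h ▸ h4)
  have hbv := b.isLt
  simp only [ne_eq, Fin.ext_iff] at e0 e1 e2 e3 e4
  omega

lemma card_le_two_five {P : Finset (Set (Fin 5))}
    (hP : IsDCPartition (pathGraph 5) P) : P.card ≤ 2 := by
  classical
  by_contra hcard
  push_neg at hcard
  obtain ⟨hne, hdisj, -, -, hpart⟩ := hP
  obtain ⟨A, hA⟩ := Finset.card_pos.mp (by omega : 0 < P.card)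
  obtain ⟨B, hB, hBA, hDD⟩ := hpart A hA
  obtain ⟨f0, f1, f3, f4⟩ := ddom_path_forced (by norm_num) hDD
  obtain ⟨C, hC⟩ := Finset.card_pos.mp (show 0 < ((P.erase A).erase B).card by
    rw [Finset.card_erase_of_mem (Finset.mem_erase.mpr ⟨hBA, hB⟩),
      Finset.card_erase_of_mem hA]
    omega)
  have hh1 := Finset.mem_erase.mp hC
  have hh2 := Finset.mem_erase.mp hh1.2
  have hCB : C ≠ B := hh1.1
  have hCA : C ≠ A := hh2.1
  have hCP : C ∈ P := hh2.2
  -- every element of C equals vertex 2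
  have hCsub : ∀ x ∈ C, x = (⟨2, by omega⟩ : Fin 5) := by
    intro x hx
    have hxA : x ∉ A := Set.disjoint_left.mp (hdisj C hCP A hA hCA) hx
    have hxB : x ∉ B := Set.disjoint_left.mp (hdisj C hCP B hB hCB) hx
    have hxAB : x ∉ A ∪ B := fun h => h.elim hxA hxB
    have hxv := x.isLt
    have e0 : x ≠ ⟨0, by omega⟩ := fun h => hxAB (h ▸ f0)
    have e1 : x ≠ ⟨1, by omega⟩ := fun h => hxAB (h ▸ f1)
    have e3 : x ≠ ⟨3, by omega⟩ := fun h => hxAB (h ▸ f3)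
    have e4 : x ≠ ⟨4, by omega⟩ := fun h => hxAB (h ▸ f4)
    simp only [ne_eq, Fin.ext_iff] at e0 e1 e3 e4 ⊢
    omega
  obtain ⟨c, hc⟩ := hne C hCP
  have hc2 : (⟨2, by omega⟩ : Fin 5) ∈ C := hCsub c hc ▸ hc
  -- partner of C
  obtain ⟨E, hE, hEC, hDDE⟩ := hpart C hCP
  obtain ⟨g0, g1, g3, g4⟩ := ddom_path_forced (by norm_num) hDDE
  have notC : ∀ k : ℕ, ∀ hk : k < 5, k ≠ 2 → (⟨k, hk⟩ : Fin 5) ∉ C := by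
    intro k hk hkne hmem
    have := hCsub _ hmem
    rw [Fin.ext_iff] at this
    exact hkne this
  have hE0 : (⟨0, by omega⟩ : Fin 5) ∈ E := g0.resolve_left (notC 0 (by omega) (by omega))
  have hE1 : (⟨1, by omega⟩ : Fin 5) ∈ E := g1.resolve_left (notC 1 (by omega) (by omega))
  have hE3 : (⟨3, by omega⟩ : Fin 5) ∈ E := g3.resolve_left (notC 3 (by omega) (by omega))
  have hE4 : (⟨4, by omega⟩ : Fin 5) ∈ E := g4.resolve_left (notC 4 (by omega) (by omega))
  by_cases hEA : E = A
  · subst hEA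
    exact no_room_five (hdisj E hE B hB (Ne.symm hBA)) (hdisj B hB C hCP (Ne.symm hCB))
      hE0 hE1 hE3 hE4 hc2 (hne B hB)
  · by_cases hEB : E = B
    · subst hEB
      exact no_room_five (hdisj E hE A hA hBA) (hdisj A hA C hCP (Ne.symm hCA))
        hE0 hE1 hE3 hE4 hc2 (hne A hA)
    · have h0AB : (⟨0, by omega⟩ : Fin 5) ∈ A ∪ B := f0
      rcases h0AB with h | h
      · exact Set.disjoint_left.mp (hdisj E hE A hA hEA) hE0 h
      · exact Set.disjoint_left.mp (hdisj E hE B hB hEB) hE0 h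

end Helpers

theorem stmt_12 (n : ℕ) (h2 : 2 ≤ n) (h5 : n ≤ 5) :
    DC (pathGraph n) = 2 := by
  have hbound : ∀ k ∈ {k | ∃ P : Finset (Set (Fin n)),
      IsDCPartition (pathGraph n) P ∧ P.card = k}, k ≤ 2 := by
    rintro k ⟨P, hP, rfl⟩
    interval_cases n
    · exact card_le_two_of_ddom_univ (fun D hD => ddom_eq_univ (by norm_num) (by norm_num) hD) hP
    · exact card_le_two_of_ddom_univ (fun D hD => ddom_eq_univ (by norm_num) (by norm_num) hD) hP
    · exact card_le_two_of_ddom_univ (fun D hD => ddom_eq_univ (by norm_num) (by norm_num) hD) hP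
    · exact card_le_two_five hP
  obtain ⟨P, hP, hcard⟩ := exists_dc_partition h2
  have hmem : 2 ∈ {k | ∃ P : Finset (Set (Fin n)),
      IsDCPartition (pathGraph n) P ∧ P.card = k} := ⟨P, hP, hcard⟩
  exact le_antisymm (csSup_le ⟨2, hmem⟩ hbound) (le_csSup ⟨2, hbound⟩ hmem)
end

section
/- For every cycle C_n with n ≥ 3, there is no double coalition partition of C_n of size 4: in any partition {A,B,C,D} of V(C_n) in which A∪B and C∪D are double dominating sets, one obtains n ≥ 2⌈2n/3⌉, a contradiction. -/
open SimpleGraph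

variable {V : Type*}

section Aux

open Fin.CommRing

lemma fin_one_ne_zero (m : ℕ) : (1 : Fin (m+3)) ≠ 0 := by simp [Fin.ext_iff]

lemma fin_two_ne_zero (m : ℕ) : (2 : Fin (m+3)) ≠ 0 := by
  intro e
  have h := congrArg Fin.val e
  rw [Fin.val_two, Fin.val_zero] at h
  omega

lemma triple_card (m : ℕ) (v : Fin (m+3)) :
    ({v-1, v, v+1} : Finset (Fin (m+3))).card = 3 := by
  rw [Finset.card_insert_of_notMem, Finset.card_insert_of_notMem, Finset.card_singleton]
  · simp only [Finset.mem_singleton]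
    intro e; exact fin_one_ne_zero m (by linear_combination -e)
  · simp only [Finset.mem_insert, Finset.mem_singleton]
    rintro (e | e)
    · exact fin_one_ne_zero m (by linear_combination -e)
    · exact fin_two_ne_zero m (by linear_combination -e)

lemma nbhd_eq (m : ℕ) (v : Fin (m+3)) :
    (cycleGraph (m+3)).neighborSet v ∪ {v} = ↑({v-1, v, v+1} : Finset (Fin (m+3))) := by
  rw [cycleGraph_neighborSet]
  ext x
  simp only [Set.mem_union, Set.mem_insert_iff, Set.mem_singleton_iff, Finset.coe_insert,
    Finset.coe_singleton, Finset.mem_insert, Finset.mem_singleton]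
  tauto

lemma nbhd_ncard {n : ℕ} (hn : 3 ≤ n) (v : Fin n) :
    ((cycleGraph n).neighborSet v ∪ {v}).ncard = 3 := by
  obtain ⟨m, rfl⟩ : ∃ m, n = m + 3 := ⟨n - 3, by omega⟩
  rw [nbhd_eq, Set.ncard_coe_finset, triple_card]

open scoped Classical in
/-- The double-counting lower bound: any double dominating set of `C_n` has `3|D| ≥ 2n`. -/
lemma ddom_lower {n : ℕ} (hn : 3 ≤ n) {D : Set (Fin n)}
    (hD : DDom (cycleGraph n) D) : 2 * n ≤ 3 * D.ncard := by
  classical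
  obtain ⟨m, rfl⟩ : ∃ m, n = m + 3 := ⟨n - 3, by omega⟩
  set D' := D.toFinset with hD'def
  have hcv : ∀ v : Fin (m+3),
      2 ≤ (({v-1,v,v+1} : Finset (Fin (m+3))) ∩ D').card := by
    intro v
    have h := hD v
    rw [nbhd_eq, ← Set.coe_toFinset D, ← Finset.coe_inter, Set.ncard_coe_finset] at h
    exact h
  have key : ∑ v : Fin (m+3), (({v-1,v,v+1} : Finset (Fin (m+3))) ∩ D').card
      = 3 * D'.card := by
    have step1 : ∀ v : Fin (m+3), (({v-1,v,v+1} : Finset (Fin (m+3))) ∩ D').card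
        = ∑ d ∈ D', if d ∈ ({v-1,v,v+1} : Finset (Fin (m+3))) then 1 else 0 := by
      intro v
      rw [Finset.inter_comm, ← Finset.filter_mem_eq_inter, Finset.card_filter]
    calc ∑ v : Fin (m+3), (({v-1,v,v+1} : Finset (Fin (m+3))) ∩ D').card
        = ∑ v : Fin (m+3), ∑ d ∈ D',
            (if d ∈ ({v-1,v,v+1} : Finset (Fin (m+3))) then 1 else 0) := by
          exact Finset.sum_congr rfl fun v _ => step1 v
      _ = ∑ d ∈ D', ∑ v : Fin (m+3),
            (if d ∈ ({v-1,v,v+1} : Finset (Fin (m+3))) then 1 else 0) := by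
          exact Finset.sum_comm
      _ = ∑ d ∈ D', 3 := by
          refine Finset.sum_congr rfl fun d _ => ?_
          rw [← Finset.card_filter]
          have hfil : (Finset.univ.filter
              (fun v : Fin (m+3) => d ∈ ({v-1,v,v+1} : Finset (Fin (m+3)))))
              = {d-1, d, d+1} := by
            ext v
            simp only [Finset.mem_filter, Finset.mem_univ, true_and, Finset.mem_insert,
              Finset.mem_singleton]
            constructor
            · rintro (e | e | e)
              · right; right; linear_combination -e
              · right; left; exact e.symm
              · left; linear_combination -e
            · rintro (e | e | e)
              · right; right; linear_combination -e
              · right; left; exact e.symm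
              · left; linear_combination -e
          rw [hfil]
          exact triple_card m d
      _ = 3 * D'.card := by rw [Finset.sum_const, smul_eq_mul, mul_comm]
  have lower : 2 * (m+3) ≤ ∑ v : Fin (m+3),
      (({v-1,v,v+1} : Finset (Fin (m+3))) ∩ D').card := by
    calc 2 * (m+3) = ∑ _v : Fin (m+3), 2 := by
          rw [Finset.sum_const, Finset.card_univ, Fintype.card_fin, smul_eq_mul, mul_comm]
      _ ≤ _ := Finset.sum_le_sum fun v _ => hcv v
  have : D.ncard = D'.card := by rw [hD'def, Set.ncard_eq_toFinset_card']
  omega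

end Aux

section Main

variable {n : ℕ}

lemma star_lemma (hn : 3 ≤ n) {A B C D : Set (Fin n)}
    (hAB : Disjoint A B) (hAC : Disjoint A C) (hAD : Disjoint A D)
    (hBC : Disjoint B C) (hBD : Disjoint B D) (hCD : Disjoint C D)
    (h1 : DDom (cycleGraph n) (A ∪ B)) (h2 : DDom (cycleGraph n) (A ∪ C))
    (h3 : DDom (cycleGraph n) (A ∪ D)) : DDom (cycleGraph n) A := by
  intro v
  set N := (cycleGraph n).neighborSet v ∪ {v} with hN
  have hN3 : N.ncard = 3 := nbhd_ncard hn v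
  have hNfin : N.Finite := Set.toFinite N
  -- abbreviations
  have hsplit : ∀ X Y : Set (Fin n), (N ∩ (X ∪ Y)).ncard ≤ (N ∩ X).ncard + (N ∩ Y).ncard := by
    intro X Y
    rw [Set.inter_union_distrib_left]
    exact Set.ncard_union_le _ _
  have e1 : 2 ≤ (N ∩ A).ncard + (N ∩ B).ncard := le_trans (h1 v) (hsplit A B)
  have e2 : 2 ≤ (N ∩ A).ncard + (N ∩ C).ncard := le_trans (h2 v) (hsplit A C)
  have e3 : 2 ≤ (N ∩ A).ncard + (N ∩ D).ncard := le_trans (h3 v) (hsplit A D)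
  have hsum : (N ∩ A).ncard + (N ∩ B).ncard + (N ∩ C).ncard + (N ∩ D).ncard ≤ 3 := by
    have hd1 : Disjoint (N ∩ A) (N ∩ B) :=
      hAB.mono Set.inter_subset_right Set.inter_subset_right
    have hd2 : Disjoint ((N ∩ A) ∪ (N ∩ B)) (N ∩ C) := by
      rw [Set.disjoint_union_left]
      exact ⟨hAC.mono Set.inter_subset_right Set.inter_subset_right,
        hBC.mono Set.inter_subset_right Set.inter_subset_right⟩
    have hd3 : Disjoint ((N ∩ A) ∪ (N ∩ B) ∪ (N ∩ C)) (N ∩ D) := by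
      rw [Set.disjoint_union_left, Set.disjoint_union_left]
      exact ⟨⟨hAD.mono Set.inter_subset_right Set.inter_subset_right,
        hBD.mono Set.inter_subset_right Set.inter_subset_right⟩,
        hCD.mono Set.inter_subset_right Set.inter_subset_right⟩
    have hsub : (N ∩ A) ∪ (N ∩ B) ∪ (N ∩ C) ∪ (N ∩ D) ⊆ N := by
      intro x hx
      rcases hx with ((hx | hx) | hx) | hx <;> exact hx.1
    calc (N ∩ A).ncard + (N ∩ B).ncard + (N ∩ C).ncard + (N ∩ D).ncard
        = ((N ∩ A) ∪ (N ∩ B) ∪ (N ∩ C) ∪ (N ∩ D)).ncard := by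
          rw [Set.ncard_union_eq hd3, Set.ncard_union_eq hd2, Set.ncard_union_eq hd1]
      _ ≤ N.ncard := Set.ncard_le_ncard hsub hNfin
      _ = 3 := hN3
  omega

lemma pair_ineq (hn : 3 ≤ n) {D1 D2 : Set (Fin n)} (hd : Disjoint D1 D2)
    (h1 : DDom (cycleGraph n) D1) (h2 : DDom (cycleGraph n) D2) :
    2 * ((2 * n + 2) / 3) ≤ n := by
  have l1 := ddom_lower hn h1
  have l2 := ddom_lower hn h2
  have hsum : D1.ncard + D2.ncard ≤ n := by
    calc D1.ncard + D2.ncard = (D1 ∪ D2).ncard := (Set.ncard_union_eq hd).symm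
      _ ≤ (Set.univ : Set (Fin n)).ncard :=
          Set.ncard_le_ncard (Set.subset_univ _) (Set.toFinite _)
      _ = n := by rw [Set.ncard_univ, Nat.card_eq_fintype_card, Fintype.card_fin]
  omega

lemma pair_false (hn : 3 ≤ n) {D1 D2 : Set (Fin n)} (hd : Disjoint D1 D2)
    (h1 : DDom (cycleGraph n) D1) (h2 : DDom (cycleGraph n) D2) : False := by
  have := pair_ineq hn hd h1 h2
  omega

/-- Matching/case analysis step. -/
lemma step_lemma (hn : 3 ≤ n) {A B C D : Set (Fin n)}
    (hAB : Disjoint A B) (hAC : Disjoint A C) (hAD : Disjoint A D)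
    (hBC : Disjoint B C) (hBD : Disjoint B D) (hCD : Disjoint C D)
    (nA : ¬ DDom (cycleGraph n) A) (nB : ¬ DDom (cycleGraph n) B)
    (hABu : DDom (cycleGraph n) (A ∪ B))
    (hC : DDom (cycleGraph n) (C ∪ A) ∨ DDom (cycleGraph n) (C ∪ B) ∨
      DDom (cycleGraph n) (C ∪ D))
    (hD : DDom (cycleGraph n) (D ∪ A) ∨ DDom (cycleGraph n) (D ∪ B) ∨
      DDom (cycleGraph n) (D ∪ C)) : False := by
  have dABCD : Disjoint (A ∪ B) (C ∪ D) := by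
    rw [Set.disjoint_union_left]
    constructor <;> rw [Set.disjoint_union_right]
    · exact ⟨hAC, hAD⟩
    · exact ⟨hBC, hBD⟩
  rcases hC with hC | hC | hC
  · -- C's partner is A
    rcases hD with hD | hD | hD
    · -- D's partner is A : star at A
      exact nA (star_lemma hn hAB hAC hAD hBC hBD hCD hABu
        (by rwa [Set.union_comm] at hC) (by rwa [Set.union_comm] at hD))
    · -- pairs (A∪C), (B∪D)
      have hC' : DDom (cycleGraph n) (A ∪ C) := by rwa [Set.union_comm] at hC
      have hD' : DDom (cycleGraph n) (B ∪ D) := by rwa [Set.union_comm] at hD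
      have hdisj : Disjoint (A ∪ C) (B ∪ D) := by
        rw [Set.disjoint_union_left]
        constructor <;> rw [Set.disjoint_union_right]
        · exact ⟨hAB, hAD⟩
        · exact ⟨hBC.symm, hCD⟩
      exact pair_false hn hdisj hC' hD'
    · have hD' : DDom (cycleGraph n) (C ∪ D) := by rwa [Set.union_comm] at hD
      exact pair_false hn dABCD hABu hD'
  · -- C's partner is B
    rcases hD with hD | hD | hD
    · -- pairs (B∪C), (A∪D)
      have hC' : DDom (cycleGraph n) (B ∪ C) := by rwa [Set.union_comm] at hC
      have hD' : DDom (cycleGraph n) (A ∪ D) := by rwa [Set.union_comm] at hD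
      have hdisj : Disjoint (B ∪ C) (A ∪ D) := by
        rw [Set.disjoint_union_left]
        constructor <;> rw [Set.disjoint_union_right]
        · exact ⟨hAB.symm, hBD⟩
        · exact ⟨hAC.symm, hCD⟩
      exact pair_false hn hdisj hC' hD'
    · -- star at B
      refine nB (star_lemma hn hAB.symm hBC hBD hAC hAD hCD
        (by rwa [Set.union_comm] at hABu) (by rwa [Set.union_comm] at hC)
        (by rwa [Set.union_comm] at hD))
    · have hD' : DDom (cycleGraph n) (C ∪ D) := by rwa [Set.union_comm] at hD
      exact pair_false hn dABCD hABu hD'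
  · exact pair_false hn dABCD hABu hC

lemma card3_le {α : Type*} [DecidableEq α] (a b c : α) :
    ({a, b, c} : Finset α).card ≤ 3 := by
  have h1 := Finset.card_insert_le a ({b, c} : Finset α)
  have h2 := Finset.card_insert_le b ({c} : Finset α)
  have h3 : ({c} : Finset α).card = 1 := Finset.card_singleton c
  omega

lemma card4_distinct {α : Type*} [DecidableEq α] {A B C D : α}
    (h : ({A, B, C, D} : Finset α).card = 4) :
    A ≠ B ∧ A ≠ C ∧ A ≠ D ∧ B ≠ C ∧ B ≠ D ∧ C ≠ D := by
  have key : ∀ a b c : α, ({A, B, C, D} : Finset α) ⊆ {a, b, c} → False := by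
    intro a b c hsub
    have := Finset.card_le_card hsub
    have := card3_le a b c
    omega
  refine ⟨?_, ?_, ?_, ?_, ?_, ?_⟩ <;> rintro rfl
  · exact key A C D (by intro x; simp; try tauto)
  · exact key A B D (by intro x; simp; try tauto)
  · exact key A B C (by intro x; simp; try tauto)
  · exact key A B D (by intro x; simp; try tauto)
  · exact key A B C (by intro x; simp; try tauto)
  · exact key A B C (by intro x; simp; try tauto)

end Main

open scoped Classical in
theorem stmt_16 (n : ℕ) (h : 3 ≤ n) :
    (¬ ∃ P : Finset (Set (Fin n)), IsDCPartition (cycleGraph n) P ∧ P.card = 4) ∧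
    (∀ A B C D : Set (Fin n),
      (Finset.card {A, B, C, D} = 4) →
      ({A, B, C, D} : Finset (Set (Fin n))).sup id = Set.univ →
      (∀ X ∈ ({A, B, C, D} : Finset (Set (Fin n))), ∀ Y ∈ ({A, B, C, D} : Finset (Set (Fin n))),
        X ≠ Y → Disjoint X Y) →
      DDom (cycleGraph n) (A ∪ B) → DDom (cycleGraph n) (C ∪ D) →
      2 * ((2 * n + 2) / 3) ≤ n) := by
  constructor
  · rintro ⟨P, ⟨hne, hdisj, hcov, hnd, hco⟩, hcard⟩
    have hP0 : P.Nonempty := by rw [← Finset.card_pos, hcard]; omega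
    obtain ⟨A, hA⟩ := hP0
    have hE : (P.erase A).card = 3 := by rw [Finset.card_erase_of_mem hA, hcard]
    obtain ⟨B, C, D, hBC, hBD, hCD, hErase⟩ := Finset.card_eq_three.mp hE
    have hB' : B ∈ P.erase A := by rw [hErase]; simp
    have hC' : C ∈ P.erase A := by rw [hErase]; simp
    have hD' : D ∈ P.erase A := by rw [hErase]; simp
    have hAB : A ≠ B := (Finset.ne_of_mem_erase hB').symm
    have hAC : A ≠ C := (Finset.ne_of_mem_erase hC').symm
    have hAD : A ≠ D := (Finset.ne_of_mem_erase hD').symm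
    have hB : B ∈ P := Finset.mem_of_mem_erase hB'
    have hC : C ∈ P := Finset.mem_of_mem_erase hC'
    have hD : D ∈ P := Finset.mem_of_mem_erase hD'
    have hPmem : ∀ Y : Set (Fin n), Y ∈ P ↔ Y = A ∨ Y = B ∨ Y = C ∨ Y = D := by
      intro Y
      rw [← Finset.insert_erase hA, hErase]
      simp
    -- disjointness
    have dAB := hdisj A hA B hB hAB
    have dAC := hdisj A hA C hC hAC
    have dAD := hdisj A hA D hD hAD
    have dBC := hdisj B hB C hC hBC
    have dBD := hdisj B hB D hD hBD
    have dCD := hdisj C hC D hD hCD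
    have nA := hnd A hA
    have nB := hnd B hB
    have nC := hnd C hC
    have nD := hnd D hD
    -- partner disjunctions
    have Bor : DDom (cycleGraph n) (B ∪ A) ∨ DDom (cycleGraph n) (B ∪ C) ∨
        DDom (cycleGraph n) (B ∪ D) := by
      obtain ⟨Y, hYP, hYne, hDY⟩ := hco B hB
      rcases (hPmem Y).1 hYP with rfl | rfl | rfl | rfl
      · left; exact hDY
      · exact absurd rfl hYne
      · right; left; exact hDY
      · right; right; exact hDY
    have Cor : DDom (cycleGraph n) (C ∪ A) ∨ DDom (cycleGraph n) (C ∪ B) ∨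
        DDom (cycleGraph n) (C ∪ D) := by
      obtain ⟨Y, hYP, hYne, hDY⟩ := hco C hC
      rcases (hPmem Y).1 hYP with rfl | rfl | rfl | rfl
      · left; exact hDY
      · right; left; exact hDY
      · exact absurd rfl hYne
      · right; right; exact hDY
    have Dor : DDom (cycleGraph n) (D ∪ A) ∨ DDom (cycleGraph n) (D ∪ B) ∨
        DDom (cycleGraph n) (D ∪ C) := by
      obtain ⟨Y, hYP, hYne, hDY⟩ := hco D hD
      rcases (hPmem Y).1 hYP with rfl | rfl | rfl | rfl
      · left; exact hDY
      · right; left; exact hDY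
      · right; right; exact hDY
      · exact absurd rfl hYne
    obtain ⟨X, hXP, hXne, hDX⟩ := hco A hA
    rcases (hPmem X).1 hXP with e | e | e | e
    · exact absurd e hXne
    · rw [e] at hDX
      exact step_lemma h dAB dAC dAD dBC dBD dCD nA nB hDX Cor Dor
    · rw [e] at hDX
      have Dor' : DDom (cycleGraph n) (D ∪ A) ∨ DDom (cycleGraph n) (D ∪ C) ∨
          DDom (cycleGraph n) (D ∪ B) := by
        rcases Dor with hx | hx | hx
        · exact Or.inl hx
        · exact Or.inr (Or.inr hx)
        · exact Or.inr (Or.inl hx)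
      exact step_lemma h dAC dAB dAD dBC.symm dCD dBD nA nC hDX Bor Dor'
    · rw [e] at hDX
      have Bor' : DDom (cycleGraph n) (B ∪ A) ∨ DDom (cycleGraph n) (B ∪ D) ∨
          DDom (cycleGraph n) (B ∪ C) := by
        rcases Bor with hx | hx | hx
        · exact Or.inl hx
        · exact Or.inr (Or.inr hx)
        · exact Or.inr (Or.inl hx)
      have Cor' : DDom (cycleGraph n) (C ∪ A) ∨ DDom (cycleGraph n) (C ∪ D) ∨
          DDom (cycleGraph n) (C ∪ B) := by
        rcases Cor with hx | hx | hx
        · exact Or.inl hx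
        · exact Or.inr (Or.inr hx)
        · exact Or.inr (Or.inl hx)
      exact step_lemma h dAD dAB dAC dBD.symm dCD.symm dBC nA nD hDX Bor' Cor'
  · intro A B C D hcard _hcov hdisj h1 h2
    obtain ⟨hAB, hAC, hAD, hBC, hBD, hCD⟩ := card4_distinct hcard
    have mA : A ∈ ({A, B, C, D} : Finset (Set (Fin n))) := by simp
    have mB : B ∈ ({A, B, C, D} : Finset (Set (Fin n))) := by simp
    have mC : C ∈ ({A, B, C, D} : Finset (Set (Fin n))) := by simp
    have mD : D ∈ ({A, B, C, D} : Finset (Set (Fin n))) := by simp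
    have hd : Disjoint (A ∪ B) (C ∪ D) := by
      rw [Set.disjoint_union_left]
      constructor <;> rw [Set.disjoint_union_right]
      · exact ⟨hdisj A mA C mC hAC, hdisj A mA D mD hAD⟩
      · exact ⟨hdisj B mB C mC hBC, hdisj B mB D mD hBD⟩
    exact pair_ineq h hd h1 h2
end
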